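/- Let u be a real n_Y-vector with ‖u‖₂ = 1 and v any real n_X-vector. Then trace((u vᵀ)ᵀ 𝒜(u vᵀ)) = vᵀ B̂ v, where B̂ is the n_X×n_X matrix B̂ = λ(L_x² + 2 (uᵀ L_y u) L_x + (uᵀ L_y² u) I_{n_X}) + Σ_{α=1}^{n_inj} (uᵀ diag(Ω_α) u) X_α X_αᵀ. -/

import Mathlib

/-!
Since `trace ((u vᵀ)ᵀ M) = uᵀ M v`, every term `P (u vᵀ) Q` of `𝒜(u vᵀ)` contributes
`(uᵀ P u) (vᵀ Q v)`, which is linear in the `n_X × n_X` factor `Q`; the term `W L_x²` carries the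
factor `uᵀ u`, which is `1` by the normalisation of `u`.
-/

open Matrix

/-- The operator `𝒜(W) = λ(W L_x² + 2 L_y W L_x + L_y² W) + Σ_α diag(Ω_α) W X_α X_αᵀ`. -/
noncomputable def opA {nY nX ninj : ℕ} (lam : ℝ)
    (Lx : Matrix (Fin nX) (Fin nX) ℝ) (Ly : Matrix (Fin nY) (Fin nY) ℝ)
    (X : Matrix (Fin nX) (Fin ninj) ℝ) (Om : Matrix (Fin nY) (Fin ninj) ℝ)
    (W : Matrix (Fin nY) (Fin nX) ℝ) : Matrix (Fin nY) (Fin nX) ℝ :=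
  lam • (W * Lx ^ 2 + (2 : ℝ) • (Ly * W * Lx) + Ly ^ 2 * W) +
    ∑ α : Fin ninj,
      Matrix.diagonal (fun i => Om i α) * W *
        Matrix.vecMulVec (fun k => X k α) (fun k => X k α)

namespace Matrix

variable {R l m n o : Type*} [CommSemiring R] [Fintype m] [Fintype n]

theorem trace_transpose_vecMulVec_mul (u : m → R) (v : n → R) (M : Matrix m n R) :
    trace ((vecMulVec u v)ᵀ * M) = u ⬝ᵥ M *ᵥ v := by
  rw [transpose_vecMulVec, vecMulVec_mul, trace_vecMulVec, dotProduct_comm, dotProduct_mulVec]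

theorem dotProduct_mul_vecMulVec_mul_mulVec [Fintype l] [Fintype o] (a : l → R) (P : Matrix l m R)
    (u : m → R) (v : n → R) (Q : Matrix n o R) (b : o → R) :
    a ⬝ᵥ (P * vecMulVec u v * Q) *ᵥ b = (a ⬝ᵥ P *ᵥ u) * (v ⬝ᵥ Q *ᵥ b) := by
  rw [← mulVec_mulVec, ← mulVec_mulVec, vecMulVec_mulVec, op_smul_eq_smul, mulVec_smul,
    dotProduct_smul, smul_eq_mul, mul_comm]

end Matrix

theorem EuclideanSpace.dotProduct_self_eq_norm_sq {ι : Type*} [Fintype ι] (u : ι → ℝ) :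
    u ⬝ᵥ u = ‖(EuclideanSpace.equiv ι ℝ).symm u‖ ^ 2 := by
  rw [← real_inner_self_eq_norm_sq, EuclideanSpace.inner_eq_star_dotProduct]
  simp

theorem dotProduct_opA_vecMulVec_mulVec {nY nX ninj : ℕ} (lam : ℝ)
    (Lx : Matrix (Fin nX) (Fin nX) ℝ) (Ly : Matrix (Fin nY) (Fin nY) ℝ)
    (X : Matrix (Fin nX) (Fin ninj) ℝ) (Om : Matrix (Fin nY) (Fin ninj) ℝ)
    (u : Fin nY → ℝ) (v : Fin nX → ℝ) :
    u ⬝ᵥ opA lam Lx Ly X Om (vecMulVec u v) *ᵥ v =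
      v ⬝ᵥ (lam • ((u ⬝ᵥ u) • Lx ^ 2 + (2 * (u ⬝ᵥ Ly *ᵥ u)) • Lx +
            (u ⬝ᵥ (Ly ^ 2) *ᵥ u) • (1 : Matrix (Fin nX) (Fin nX) ℝ)) +
          ∑ α : Fin ninj,
            (u ⬝ᵥ (diagonal fun i => Om i α) *ᵥ u) •
              vecMulVec (fun k => X k α) (fun k => X k α)) *ᵥ v := by
  rw [opA, ← Matrix.one_mul (vecMulVec u v * Lx ^ 2), ← Matrix.mul_assoc,
    ← Matrix.mul_one (Ly ^ 2 * vecMulVec u v)]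
  simp only [add_mulVec, smul_mulVec, sum_mulVec, one_mulVec, dotProduct_add,
    dotProduct_smul, dotProduct_sum, dotProduct_mul_vecMulVec_mul_mulVec, smul_eq_mul]
  ring

/-- For `‖u‖₂ = 1`, `trace((u vᵀ)ᵀ 𝒜(u vᵀ)) = vᵀ B̂ v` where
`B̂ = λ(L_x² + 2(uᵀL_y u) L_x + (uᵀL_y²u) I) + Σ_α (uᵀ diag(Ω_α) u) X_αX_αᵀ`. -/
theorem rank_one_quadratic_form_v {nY nX ninj : ℕ} (lam : ℝ)
    (Lx : Matrix (Fin nX) (Fin nX) ℝ) (Ly : Matrix (Fin nY) (Fin nY) ℝ)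
    (X : Matrix (Fin nX) (Fin ninj) ℝ) (Om : Matrix (Fin nY) (Fin ninj) ℝ)
    (u : Fin nY → ℝ) (hu : ‖(EuclideanSpace.equiv (Fin nY) ℝ).symm u‖ = 1)
    (v : Fin nX → ℝ) :
    Matrix.trace ((Matrix.vecMulVec u v)ᵀ *
        opA lam Lx Ly X Om (Matrix.vecMulVec u v)) =
      v ⬝ᵥ (lam • (Lx ^ 2 + (2 * (u ⬝ᵥ Ly.mulVec u)) • Lx +
            (u ⬝ᵥ (Ly ^ 2).mulVec u) • (1 : Matrix (Fin nX) (Fin nX) ℝ)) +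
          ∑ α : Fin ninj,
            (u ⬝ᵥ (Matrix.diagonal (fun i => Om i α)).mulVec u) •
              Matrix.vecMulVec (fun k => X k α) (fun k => X k α)).mulVec v := by
  have hu' : u ⬝ᵥ u = 1 := by rw [EuclideanSpace.dotProduct_self_eq_norm_sq, hu, one_pow]
  rw [trace_transpose_vecMulVec_mul, dotProduct_opA_vecMulVec_mulVec, hu', one_smul]
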